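/- arXiv:2401.14519 — 4 statements merged into one kernel-verified Lean document; each statement's English description precedes it below -/
import Mathlib

section
/- For all real numbers x, y > 0 and 0 < s < 1/2, one has α(x+2s, y+2s) ≤ α(x,y) · (xy/((x+y+1)(x+y)))^{2s}. -/
/-!
Hölder's inequality with exponents `1/(1-θ)` and `1/θ`, applied to the integrand, shows that
`α` is log-convex in `(x, y)`; in particular `α(x+θ, y+θ) ≤ α(x,y)^{1-θ} α(x+1,y+1)^θ`.
The identity `α = Γ(x)Γ(y)/Γ(x+y)` and `Γ(z+1) = zΓ(z)` give
`α(x+1, y+1) = α(x,y) · xy/((x+y+1)(x+y))`, and `θ = 2s` yields the bound.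
-/

open MeasureTheory

/-- `α(x,y) = ∫₀¹ t^{x-1} (1-t)^{y-1} dt`. -/
noncomputable def alpha (x y : ℝ) : ℝ :=
  ∫ t in (0:ℝ)..1, t ^ (x - 1) * (1 - t) ^ (y - 1)

open Set

theorem integral_rpow_mul_rpow_le {Ω : Type*} [MeasurableSpace Ω] {μ : Measure Ω}
    {f g : Ω → ℝ} (hf0 : 0 ≤ᵐ[μ] f) (hg0 : 0 ≤ᵐ[μ] g) (hf : Integrable f μ)
    (hg : Integrable g μ) {p q : ℝ} (hp : 0 ≤ p) (hq : 0 ≤ q) (hpq : p + q = 1) :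
    ∫ a, f a ^ p * g a ^ q ∂μ ≤ (∫ a, f a ∂μ) ^ p * (∫ a, g a ∂μ) ^ q := by
  have holder := ENNReal.lintegral_mul_norm_pow_le hf.aemeasurable.ennreal_ofReal
    hg.aemeasurable.ennreal_ofReal hp hq hpq
  have hpointwise : ∀ᵐ a ∂μ, ENNReal.ofReal (f a) ^ p * ENNReal.ofReal (g a) ^ q
      = ENNReal.ofReal (f a ^ p * g a ^ q) := by
    filter_upwards [hf0, hg0] with a hfa hga
    rw [ENNReal.ofReal_mul (Real.rpow_nonneg hfa p), ENNReal.ofReal_rpow_of_nonneg hfa hp,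
      ENNReal.ofReal_rpow_of_nonneg hga hq]
  have hFint := integral_nonneg_of_ae hf0
  have hGint := integral_nonneg_of_ae hg0
  rw [lintegral_congr_ae hpointwise, ← ofReal_integral_eq_lintegral_ofReal hf hf0,
    ← ofReal_integral_eq_lintegral_ofReal hg hg0, ENNReal.ofReal_rpow_of_nonneg hFint hp,
    ENNReal.ofReal_rpow_of_nonneg hGint hq, ← ENNReal.ofReal_mul (by positivity)] at holder
  have hprod_nonneg : 0 ≤ᵐ[μ] fun a => f a ^ p * g a ^ q := by
    filter_upwards [hf0, hg0] with a hfa hga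
    exact mul_nonneg (Real.rpow_nonneg hfa p) (Real.rpow_nonneg hga q)
  rw [integral_eq_lintegral_of_nonneg_ae hprod_nonneg
    ((hf.aemeasurable.pow_const p).mul (hg.aemeasurable.pow_const q)).aestronglyMeasurable]
  exact ENNReal.toReal_le_of_le_ofReal (by positivity) holder

lemma betaIntegral_ofReal_eq_alpha (x y : ℝ) : Complex.betaIntegral x y = alpha x y := by
  rw [alpha, ← intervalIntegral.integral_ofReal, Complex.betaIntegral]
  refine intervalIntegral.integral_congr fun t ht => ?_
  rw [uIcc_of_le zero_le_one] at ht
  rw [Complex.ofReal_mul, Complex.ofReal_cpow ht.1, Complex.ofReal_cpow (by linarith [ht.2])]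
  push_cast
  ring

lemma alpha_eq_beta {x y : ℝ} (hx : 0 < x) (hy : 0 < y) :
    alpha x y = ProbabilityTheory.beta x y := by
  rw [ProbabilityTheory.beta_eq_betaIntegralReal x y hx hy, betaIntegral_ofReal_eq_alpha,
    Complex.ofReal_re]

lemma alpha_pos {x y : ℝ} (hx : 0 < x) (hy : 0 < y) : 0 < alpha x y :=
  alpha_eq_beta hx hy ▸ ProbabilityTheory.beta_pos hx hy

lemma alpha_add_one_add_one {x y : ℝ} (hx : 0 < x) (hy : 0 < y) :
    alpha (x + 1) (y + 1) = alpha x y * (x * y / ((x + y + 1) * (x + y))) := by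
  rw [alpha_eq_beta (by linarith) (by linarith), alpha_eq_beta hx hy, ProbabilityTheory.beta,
    ProbabilityTheory.beta, Real.Gamma_add_one hx.ne', Real.Gamma_add_one hy.ne',
    show x + 1 + (y + 1) = (x + y + 1) + 1 by ring, Real.Gamma_add_one (by positivity),
    Real.Gamma_add_one (by positivity)]
  have := (Real.Gamma_pos_of_pos (add_pos hx hy)).ne'
  field_simp

lemma alpha_eq_setIntegral (x y : ℝ) :
    alpha x y = ∫ t in Ioo (0 : ℝ) 1, t ^ (x - 1) * (1 - t) ^ (y - 1) := by
  rw [alpha, intervalIntegral.integral_of_le zero_le_one, integral_Ioc_eq_integral_Ioo]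

lemma integrableOn_alpha_integrand {x y : ℝ} (hx : 0 < x) (hy : 0 < y) :
    IntegrableOn (fun t : ℝ => t ^ (x - 1) * (1 - t) ^ (y - 1)) (Ioo 0 1) :=
  -- a non-integrable function has Bochner integral `0`, while `α x y > 0`
  Integrable.of_integral_ne_zero (alpha_eq_setIntegral x y ▸ (alpha_pos hx hy).ne')

lemma alpha_integrand_nonneg (x y : ℝ) :
    0 ≤ᵐ[volume.restrict (Ioo (0 : ℝ) 1)] fun t => t ^ (x - 1) * (1 - t) ^ (y - 1) := by
  filter_upwards [ae_restrict_mem measurableSet_Ioo] with t ht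
  have : 0 < 1 - t := by linarith [ht.2]
  have := ht.1
  positivity

theorem alpha_le_rpow_mul_rpow {x y x' y' θ : ℝ} (hx : 0 < x) (hy : 0 < y) (hx' : 0 < x')
    (hy' : 0 < y') (hθ0 : 0 ≤ θ) (hθ1 : θ ≤ 1) :
    alpha ((1 - θ) * x + θ * x') ((1 - θ) * y + θ * y') ≤
      alpha x y ^ (1 - θ) * alpha x' y' ^ θ := by
  have hpointwise : ∀ t ∈ Ioo (0 : ℝ) 1,
      t ^ ((1 - θ) * x + θ * x' - 1) * (1 - t) ^ ((1 - θ) * y + θ * y' - 1) =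
        (t ^ (x - 1) * (1 - t) ^ (y - 1)) ^ (1 - θ) *
          (t ^ (x' - 1) * (1 - t) ^ (y' - 1)) ^ θ := by
    intro t ht
    have hconvex : ∀ u : ℝ, 0 < u → ∀ a b : ℝ,
        u ^ ((1 - θ) * a + θ * b - 1) = (u ^ (a - 1)) ^ (1 - θ) * (u ^ (b - 1)) ^ θ := by
      intro u hu a b
      rw [← Real.rpow_mul hu.le, ← Real.rpow_mul hu.le, ← Real.rpow_add hu]
      ring_nf
    have ht0 := ht.1
    have ht1 : 0 < 1 - t := by linarith [ht.2]
    rw [Real.mul_rpow (by positivity) (by positivity), Real.mul_rpow (by positivity)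
      (by positivity), hconvex t ht0, hconvex (1 - t) ht1]
    ring
  rw [alpha_eq_setIntegral, setIntegral_congr_fun measurableSet_Ioo hpointwise,
    alpha_eq_setIntegral, alpha_eq_setIntegral]
  exact integral_rpow_mul_rpow_le (alpha_integrand_nonneg x y) (alpha_integrand_nonneg x' y')
    (integrableOn_alpha_integrand hx hy) (integrableOn_alpha_integrand hx' hy') (by linarith)
    hθ0 (by ring)

theorem alpha_positive_upper_bound (x y s : ℝ) (hx : 0 < x) (hy : 0 < y)
    (hs0 : 0 < s) (hs : s < 1 / 2) :
    alpha (x + 2 * s) (y + 2 * s) ≤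
      alpha x y * (x * y / ((x + y + 1) * (x + y))) ^ (2 * s) := by
  have hθ := alpha_le_rpow_mul_rpow hx hy (x' := x + 1) (y' := y + 1) (by linarith)
    (by linarith) (by linarith : 0 ≤ 2 * s) (by linarith)
  have hA := alpha_pos hx hy
  calc alpha (x + 2 * s) (y + 2 * s)
      = alpha ((1 - 2 * s) * x + 2 * s * (x + 1)) ((1 - 2 * s) * y + 2 * s * (y + 1)) := by
        ring_nf
    _ ≤ alpha x y ^ (1 - 2 * s) * (alpha x y * (x * y / ((x + y + 1) * (x + y)))) ^ (2 * s) := by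
        rwa [← alpha_add_one_add_one hx hy]
    _ = alpha x y * (x * y / ((x + y + 1) * (x + y))) ^ (2 * s) := by
        rw [Real.mul_rpow hA.le (by positivity), ← mul_assoc, ← Real.rpow_add hA]
        norm_num
end

section
/- For all real numbers s with 0 < s < 1/2 and all x, y > 2s, one has α(x-2s, y-2s) ≤ α(x,y) · (xy/((x-2s)(y-2s))) · (xy/((x+y+1)(x+y)))^{-2s}. -/
/-!
The Beta function is log-convex jointly in its two arguments (Hölder's inequality applied to
the Beta integral), so `α(x + 1 - 2s, y + 1 - 2s) ≤ α(x + 1, y + 1) ^ (1 - 2s) * α(x, y) ^ (2s)`.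
The recurrence `α(u + 1, v + 1) = uv / ((u + v)(u + v + 1)) · α(u, v)`, applied at `(x, y)` and at
`(x - 2s, y - 2s)`, turns this into the bound, the remaining factor
`(x + y - 4s)(x + y - 4s + 1) ≤ (x + y)(x + y + 1)` being elementary.
-/

open MeasureTheory Set

theorem integral_rpow_mul_rpow_le_s3 {X : Type*} [MeasurableSpace X] {μ : Measure X}
    {f g : X → ℝ} {a b : ℝ} (hf : 0 ≤ᵐ[μ] f) (hg : 0 ≤ᵐ[μ] g)
    (hfi : Integrable f μ) (hgi : Integrable g μ) (ha : 0 < a) (hb : 0 < b) (hab : a + b = 1) :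
    ∫ x, f x ^ a * g x ^ b ∂μ ≤ (∫ x, f x ∂μ) ^ a * (∫ x, g x ∂μ) ^ b := by
  have memLp_rpow : ∀ {h : X → ℝ} {c : ℝ}, 0 < c → 0 ≤ᵐ[μ] h → Integrable h μ →
      MemLp (fun x => h x ^ c) (ENNReal.ofReal (1 / c)) μ := by
    intro h c hc h0 hi
    have := (memLp_one_iff_integrable.2 hi).norm_rpow_div (ENNReal.ofReal c)
    rw [ENNReal.toReal_ofReal hc.le, one_div, ← ENNReal.ofReal_inv_of_pos hc] at this
    rw [one_div]
    refine this.ae_eq ?_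
    filter_upwards [h0] with x hx
    rw [Real.norm_of_nonneg hx]
  have rpow_inv : ∀ {h : X → ℝ} {c : ℝ}, 0 < c → 0 ≤ᵐ[μ] h →
      ∫ x, (h x ^ c) ^ (1 / c) ∂μ = ∫ x, h x ∂μ := by
    intro h c hc h0
    refine integral_congr_ae ?_
    filter_upwards [h0] with x hx
    rw [← Real.rpow_mul hx, mul_one_div_cancel hc.ne', Real.rpow_one]
  have hrpow_nonneg : ∀ {h : X → ℝ} (c : ℝ), 0 ≤ᵐ[μ] h → 0 ≤ᵐ[μ] fun x => h x ^ c := by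
    intro h c h0
    filter_upwards [h0] with x hx using Real.rpow_nonneg hx c
  have := integral_mul_le_Lp_mul_Lq_of_nonneg (Real.holderConjugate_one_div ha hb hab)
    (hrpow_nonneg a hf) (hrpow_nonneg b hg) (memLp_rpow ha hf hfi) (memLp_rpow hb hg hgi)
  rwa [rpow_inv ha hf, rpow_inv hb hg, one_div_one_div, one_div_one_div] at this

theorem ofReal_rpow_mul_one_sub_rpow {t : ℝ} (ht : t ∈ Icc 0 1) (u v : ℝ) :
    ((t ^ (u - 1) * (1 - t) ^ (v - 1) : ℝ) : ℂ) =
      (t : ℂ) ^ ((u : ℂ) - 1) * (1 - (t : ℂ)) ^ ((v : ℂ) - 1) := by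
  rw [Complex.ofReal_mul, Complex.ofReal_cpow ht.1, Complex.ofReal_cpow (sub_nonneg.2 ht.2)]
  push_cast
  rfl

theorem betaIntegral_ofReal (u v : ℝ) : Complex.betaIntegral u v = alpha u v := by
  rw [alpha, ← intervalIntegral.integral_ofReal]
  refine intervalIntegral.integral_congr fun t ht => ?_
  rw [uIcc_of_le zero_le_one] at ht
  exact (ofReal_rpow_mul_one_sub_rpow ht u v).symm

theorem intervalIntegrable_rpow_mul_one_sub_rpow {u v : ℝ} (hu : 0 < u) (hv : 0 < v) :
    IntervalIntegrable (fun t : ℝ => t ^ (u - 1) * (1 - t) ^ (v - 1)) volume 0 1 := by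
  have := (Complex.betaIntegral_convergent (u := u) (v := v) (by simpa) (by simpa)).norm
  refine this.congr_uIoo fun t ht => ?_
  rw [uIoo_of_le zero_le_one] at ht
  dsimp only
  rw [← ofReal_rpow_mul_one_sub_rpow (Ioo_subset_Icc_self ht), Complex.norm_real,
    Real.norm_of_nonneg (by have := ht.1; have := ht.2; positivity)]

theorem alpha_eq_beta_s3 {u v : ℝ} (hu : 0 < u) (hv : 0 < v) :
    alpha u v = ProbabilityTheory.beta u v := by
  rw [ProbabilityTheory.beta_eq_betaIntegralReal u v hu hv, betaIntegral_ofReal, Complex.ofReal_re]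

theorem alpha_pos_s3 {u v : ℝ} (hu : 0 < u) (hv : 0 < v) : 0 < alpha u v :=
  alpha_eq_beta_s3 hu hv ▸ ProbabilityTheory.beta_pos hu hv

theorem alpha_add_one_add_one_s3 {u v : ℝ} (hu : 0 < u) (hv : 0 < v) :
    alpha (u + 1) (v + 1) = u * v / ((u + v) * (u + v + 1)) * alpha u v := by
  have huv : 0 < u + v := add_pos hu hv
  rw [alpha_eq_beta_s3 (by positivity) (by positivity), alpha_eq_beta_s3 hu hv, ProbabilityTheory.beta,
    ProbabilityTheory.beta, Real.Gamma_add_one hu.ne', Real.Gamma_add_one hv.ne',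
    show u + 1 + (v + 1) = u + v + 1 + 1 by ring, Real.Gamma_add_one (by positivity),
    Real.Gamma_add_one huv.ne']
  have := (Real.Gamma_pos_of_pos huv).ne'
  field_simp

-- On the open interval `t` and `1 - t` are positive, so the `rpow` laws hold pointwise there
-- (at `t = 1` they fail because `0 ^ 0 = 1`).
theorem alpha_eq_setIntegral_Ioo (u v : ℝ) :
    alpha u v = ∫ t in Ioo 0 1, t ^ (u - 1) * (1 - t) ^ (v - 1) := by
  rw [alpha, intervalIntegral.integral_of_le zero_le_one, integral_Ioc_eq_integral_Ioo]

theorem alpha_mul_add_mul_le {u v u' v' a b : ℝ} (hu : 0 < u) (hv : 0 < v) (hu' : 0 < u')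
    (hv' : 0 < v') (ha : 0 < a) (hb : 0 < b) (hab : a + b = 1) :
    alpha (a * u + b * u') (a * v + b * v') ≤ alpha u v ^ a * alpha u' v' ^ b := by
  have integrable : ∀ {w z : ℝ}, 0 < w → 0 < z →
      IntegrableOn (fun t : ℝ => t ^ (w - 1) * (1 - t) ^ (z - 1)) (Ioo 0 1) := fun hw hz =>
    ((intervalIntegrable_iff_integrableOn_Ioo_of_le zero_le_one).1
      (intervalIntegrable_rpow_mul_one_sub_rpow hw hz))
  have nonneg : ∀ w z : ℝ, 0 ≤ᵐ[volume.restrict (Ioo (0 : ℝ) 1)]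
      fun t : ℝ => t ^ (w - 1) * (1 - t) ^ (z - 1) := fun w z => by
    filter_upwards [ae_restrict_mem measurableSet_Ioo] with t ht
    have := ht.1; have := ht.2
    positivity
  rw [alpha_eq_setIntegral_Ioo, alpha_eq_setIntegral_Ioo, alpha_eq_setIntegral_Ioo]
  refine le_of_eq_of_le (setIntegral_congr_fun measurableSet_Ioo fun t ht => ?_)
    (integral_rpow_mul_rpow_le_s3 (nonneg u v) (nonneg u' v') (integrable hu hv) (integrable hu' hv')
      ha hb hab)
  have ht0 : 0 < t := ht.1
  have ht1 : 0 < 1 - t := sub_pos.2 ht.2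
  rw [Real.mul_rpow (by positivity) (by positivity), Real.mul_rpow (by positivity) (by positivity),
    ← Real.rpow_mul ht0.le, ← Real.rpow_mul ht0.le, ← Real.rpow_mul ht1.le, ← Real.rpow_mul ht1.le,
    mul_mul_mul_comm, ← Real.rpow_add ht0, ← Real.rpow_add ht1]
  congr 2 <;> linear_combination hab

theorem alpha_sub_add_one_le {x y σ : ℝ} (hx : 0 < x) (hy : 0 < y) (hσ0 : 0 < σ) (hσ1 : σ < 1) :
    alpha (x - σ + 1) (y - σ + 1) ≤ (x * y / ((x + y) * (x + y + 1))) ^ (1 - σ) * alpha x y := by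
  have h := alpha_mul_add_mul_le (u := x + 1) (v := y + 1) (by positivity) (by positivity) hx hy
    (sub_pos.2 hσ1) hσ0 (sub_add_cancel 1 σ)
  rw [alpha_add_one_add_one_s3 hx hy, Real.mul_rpow (by positivity) (alpha_pos_s3 hx hy).le, mul_assoc,
    ← Real.rpow_add (alpha_pos_s3 hx hy), sub_add_cancel, Real.rpow_one] at h
  convert h using 2 <;> ring

theorem alpha_negative_upper_bound (x y s : ℝ) (hs0 : 0 < s) (hs : s < 1 / 2)
    (hx : 2 * s < x) (hy : 2 * s < y) :
    alpha (x - 2 * s) (y - 2 * s) ≤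
      alpha x y * (x * y / ((x - 2 * s) * (y - 2 * s))) *
        (x * y / ((x + y + 1) * (x + y))) ^ (-(2 * s)) := by
  have hx0 : 0 < x := by linarith
  have hy0 : 0 < y := by linarith
  have hconv := alpha_sub_add_one_le hx0 hy0 (by linarith : 0 < 2 * s) (by linarith : 2 * s < 1)
  rw [mul_comm (x + y)] at hconv
  set σ := 2 * s
  set R := x * y / ((x + y + 1) * (x + y))
  set P := (x - σ + (y - σ)) * (x - σ + (y - σ) + 1)
  have hu : 0 < x - σ := sub_pos.2 hx
  have hv : 0 < y - σ := sub_pos.2 hy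
  have hR : 0 < R := by positivity
  have hPR : P * R ≤ x * y := calc
    P * R ≤ (x + y + 1) * (x + y) * R := by gcongr; nlinarith
    _ = x * y := mul_div_cancel₀ _ (by positivity)
  calc alpha (x - σ) (y - σ)
      = P / ((x - σ) * (y - σ)) * alpha (x - σ + 1) (y - σ + 1) := by
        rw [alpha_add_one_add_one_s3 hu hv]; field_simp; ring
    _ ≤ P / ((x - σ) * (y - σ)) * (R ^ (1 - σ) * alpha x y) := by gcongr
    _ = P * R / ((x - σ) * (y - σ)) * R ^ (-σ) * alpha x y := by
        rw [sub_eq_add_neg 1, Real.rpow_add hR, Real.rpow_one]; ring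
    _ ≤ x * y / ((x - σ) * (y - σ)) * R ^ (-σ) * alpha x y := by
        gcongr
        exact (alpha_pos_s3 hx0 hy0).le
    _ = alpha x y * (x * y / ((x - σ) * (y - σ))) * R ^ (-σ) := by ring
end

section
/- For all real numbers s with 0 ≤ s < 1/2 and all x, y > 2s, one has α(x-2s, y-2s) · α(x+2s, y+2s) ≤ (α(x,y))² · (xy/((x-2s)(y-2s))). -/
open MeasureTheory

lemma alpha_eq_gamma (x y : ℝ) (hx : 0 < x) (hy : 0 < y) :
    alpha x y = Real.Gamma x * Real.Gamma y / Real.Gamma (x + y) := by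
  have hb : Complex.betaIntegral (x : ℂ) (y : ℂ) = ((alpha x y : ℝ) : ℂ) := by
    rw [Complex.betaIntegral, alpha, ← intervalIntegral.integral_ofReal]
    apply intervalIntegral.integral_congr
    intro t ht
    rw [Set.uIcc_of_le (by norm_num : (0:ℝ) ≤ 1)] at ht
    have h2 : (0:ℝ) ≤ 1 - t := by linarith [ht.2]
    simp only [Complex.ofReal_mul, Complex.ofReal_cpow ht.1, Complex.ofReal_cpow h2]
    push_cast
    ring
  have hG := Complex.Gamma_mul_Gamma_eq_betaIntegral
    (s := (x : ℂ)) (t := (y : ℂ)) (by simpa using hx) (by simpa using hy)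
  rw [hb] at hG
  have hxy : ((x : ℂ) + y) = ((x + y : ℝ) : ℂ) := by push_cast; ring
  rw [hxy, Complex.Gamma_ofReal, Complex.Gamma_ofReal, Complex.Gamma_ofReal,
    ← Complex.ofReal_mul, ← Complex.ofReal_mul] at hG
  have h := Complex.ofReal_injective hG
  have hne : Real.Gamma (x + y) ≠ 0 := (Real.Gamma_pos_of_pos (by linarith)).ne'
  field_simp
  linarith [h]

/-- midpoint log-convexity: `Γ(m)^2 ≤ Γ(m-d) Γ(m+d)`. -/
lemma gamma_sq_le (m d : ℝ) (hd : 0 ≤ d) (hm : d < m) :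
    Real.Gamma m ^ 2 ≤ Real.Gamma (m - d) * Real.Gamma (m + d) := by
  have hcv := Real.convexOn_log_Gamma
  have h1 : (0:ℝ) < m - d := by linarith
  have h2 : (0:ℝ) < m + d := by linarith
  have key := hcv.2 (Set.mem_Ioi.2 h1) (Set.mem_Ioi.2 h2)
    (by norm_num : (0:ℝ) ≤ 1/2) (by norm_num : (0:ℝ) ≤ 1/2) (by norm_num)
  have hmid : (1/2:ℝ) • (m - d) + (1/2:ℝ) • (m + d) = m := by
    simp only [smul_eq_mul]; ring
  rw [hmid] at key
  simp only [Function.comp, smul_eq_mul] at key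
  have hGm := Real.Gamma_pos_of_pos (by linarith : (0:ℝ) < m)
  have hG1 := Real.Gamma_pos_of_pos h1
  have hG2 := Real.Gamma_pos_of_pos h2
  have h2' : 2 * Real.log (Real.Gamma m) ≤
      Real.log (Real.Gamma (m - d)) + Real.log (Real.Gamma (m + d)) := by linarith
  have h3 := Real.exp_le_exp.mpr h2'
  rw [two_mul, Real.exp_add, Real.exp_add, Real.exp_log hGm, Real.exp_log hG1,
    Real.exp_log hG2] at h3
  nlinarith

/-- `Γ(x+1-a) Γ(x+a) ≤ Γ(x) Γ(x+1)` for `0 ≤ a < 1`, `a < x`. -/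
lemma gamma_prod_le (x a : ℝ) (ha0 : 0 ≤ a) (ha1 : a < 1) (hx : a < x) :
    Real.Gamma (x + 1 - a) * Real.Gamma (x + a) ≤ Real.Gamma x * Real.Gamma (x + 1) := by
  have hcv := Real.convexOn_log_Gamma
  have hx0 : (0:ℝ) < x := lt_of_le_of_lt ha0 hx
  have hmx : x ∈ Set.Ioi (0:ℝ) := Set.mem_Ioi.2 hx0
  have hmx1 : x + 1 ∈ Set.Ioi (0:ℝ) := Set.mem_Ioi.2 (by linarith)
  have k1 := hcv.2 hmx1 hmx (by linarith : (0:ℝ) ≤ 1 - a) ha0 (by ring)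
  have k2 := hcv.2 hmx1 hmx ha0 (by linarith : (0:ℝ) ≤ 1 - a) (by ring)
  have e1 : (1 - a) • (x + 1) + a • x = x + 1 - a := by simp [smul_eq_mul]; ring
  have e2 : a • (x + 1) + (1 - a) • x = x + a := by simp [smul_eq_mul]; ring
  rw [e1] at k1; rw [e2] at k2
  simp only [Function.comp, smul_eq_mul] at k1 k2
  have hsum : Real.log (Real.Gamma (x + 1 - a)) + Real.log (Real.Gamma (x + a)) ≤
      Real.log (Real.Gamma (x + 1)) + Real.log (Real.Gamma x) := by linarith
  have G1 := Real.Gamma_pos_of_pos (by linarith : (0:ℝ) < x + 1 - a)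
  have G2 := Real.Gamma_pos_of_pos (by linarith : (0:ℝ) < x + a)
  have G3 := Real.Gamma_pos_of_pos (by linarith : (0:ℝ) < x + 1)
  have G4 := Real.Gamma_pos_of_pos hx0
  have := Real.exp_le_exp.mpr hsum
  rw [Real.exp_add, Real.exp_add, Real.exp_log G1, Real.exp_log G2, Real.exp_log G3,
    Real.exp_log G4] at this
  linarith

theorem alpha_normalized_bound (x y s : ℝ) (hs0 : 0 ≤ s) (hs : s < 1 / 2)
    (hx : 2 * s < x) (hy : 2 * s < y) :
    alpha (x - 2 * s) (y - 2 * s) * alpha (x + 2 * s) (y + 2 * s) ≤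
      (alpha x y) ^ 2 * (x * y / ((x - 2 * s) * (y - 2 * s))) := by
  set a := 2 * s with ha
  have ha0 : 0 ≤ a := by positivity
  have ha1 : a < 1 := by rw [ha]; linarith
  have hx0 : 0 < x := lt_of_le_of_lt ha0 hx
  have hy0 : 0 < y := lt_of_le_of_lt ha0 hy
  have hxa : 0 < x - a := by linarith
  have hya : 0 < y - a := by linarith
  rw [alpha_eq_gamma _ _ hxa hya, alpha_eq_gamma _ _ (by linarith) (by linarith),
    alpha_eq_gamma _ _ hx0 hy0]
  have hxy1 : x - a + (y - a) = x + y - 2*a := by ring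
  have hxy2 : x + a + (y + a) = x + y + 2*a := by ring
  rw [hxy1, hxy2]
  -- Gamma positivity
  have G1 := Real.Gamma_pos_of_pos hxa
  have G2 := Real.Gamma_pos_of_pos hya
  have G3 := Real.Gamma_pos_of_pos (by linarith : (0:ℝ) < x + a)
  have G4 := Real.Gamma_pos_of_pos (by linarith : (0:ℝ) < y + a)
  have G5 := Real.Gamma_pos_of_pos (by linarith : (0:ℝ) < x + y - 2*a)
  have G6 := Real.Gamma_pos_of_pos (by linarith : (0:ℝ) < x + y + 2*a)
  have G7 := Real.Gamma_pos_of_pos hx0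
  have G8 := Real.Gamma_pos_of_pos hy0
  have G9 := Real.Gamma_pos_of_pos (by linarith : (0:ℝ) < x + y)
  -- key inequalities
  have key1 : Real.Gamma (x + y) ^ 2 ≤ Real.Gamma (x + y - 2*a) * Real.Gamma (x + y + 2*a) := by
    have := gamma_sq_le (x + y) (2*a) (by linarith) (by linarith)
    simpa using this
  have key2 : (x - a) * (Real.Gamma (x - a) * Real.Gamma (x + a)) ≤ x * Real.Gamma x ^ 2 := by
    have h := gamma_prod_le x a ha0 ha1 hx
    have e : x + 1 - a = (x - a) + 1 := by ring
    rw [e, Real.Gamma_add_one hxa.ne'] at h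
    rw [Real.Gamma_add_one hx0.ne'] at h
    nlinarith
  have key3 : (y - a) * (Real.Gamma (y - a) * Real.Gamma (y + a)) ≤ y * Real.Gamma y ^ 2 := by
    have h := gamma_prod_le y a ha0 ha1 hy
    have e : y + 1 - a = (y - a) + 1 := by ring
    rw [e, Real.Gamma_add_one hya.ne'] at h
    rw [Real.Gamma_add_one hy0.ne'] at h
    nlinarith
  rw [div_mul_div_comm, div_pow, div_mul_div_comm,
    div_le_div_iff₀ (by positivity) (by positivity)]
  have key23 := mul_le_mul key2 key3 (by positivity) (by positivity)
  have h1 := mul_le_mul_of_nonneg_right key23 (sq_nonneg (Real.Gamma (x + y)))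
  have h2 := mul_le_mul_of_nonneg_left key1
    (le_of_lt (by positivity : (0:ℝ) < x * Real.Gamma x ^ 2 * (y * Real.Gamma y ^ 2)))
  nlinarith [h1, h2]
end

section
/- For all real numbers x > 0 and y ∈ ℝ, the function β(x,y) = ∫_{-π/2}^{π/2} (cos t)^{x-1} e^{yt} dt satisfies β(x+2, y) = (x(x+1)/((x+1)² + y²)) · β(x,y). -/
/-! Integrate by parts over `[-π/2, π/2]`; all boundary terms vanish because `cos (±π/2) = 0`.
With `S = ∫ cos^x t · sin t · e^{yt} dt`, differentiating `cos^{x+1} t · e^{yt}` gives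
`y β(x+2, y) = (x+1) S`, and differentiating `cos^x t · sin t · e^{yt}`, with
`sin² = 1 - cos²`, gives `(x+1) β(x+2, y) + y S = x β(x, y)`. Eliminating `S` leaves
`((x+1)² + y²) β(x+2, y) = x (x+1) β(x, y)`. -/

open MeasureTheory

/-- `β(x,y) = ∫_{-π/2}^{π/2} (cos t)^{x-1} e^{yt} dt`. -/
noncomputable def beta (x y : ℝ) : ℝ :=
  ∫ t in (-(Real.pi / 2))..(Real.pi / 2), (Real.cos t) ^ (x - 1) * Real.exp (y * t)

open Real Set intervalIntegral

lemma two_div_pi_mul_le_cos {t : ℝ} (h0 : 0 ≤ t) (h1 : t ≤ π / 2) :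
    2 / π * (π / 2 - t) ≤ cos t := by
  simpa only [sin_pi_div_two_sub] using mul_le_sin (x := π / 2 - t) (by linarith) (by linarith)

lemma intervalIntegrable_cos_rpow_of_neg {p : ℝ} (hp : -1 < p) (hp0 : p < 0) :
    IntervalIntegrable (fun t => cos t ^ p) volume 0 (π / 2) := by
  have hmajorant :
      IntervalIntegrable (fun t => (2 / π) ^ p * (π / 2 - t) ^ p) volume 0 (π / 2) := by
    simpa only [sub_self, sub_zero] using
      ((intervalIntegrable_rpow' hp).comp_sub_left (π / 2) (a := π / 2) (b := 0)).const_mul _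
  rw [intervalIntegrable_iff_integrableOn_Ioo_of_le (by positivity)] at hmajorant ⊢
  refine hmajorant.mono' (continuous_cos.measurable.pow_const p).aestronglyMeasurable ?_
  refine (ae_restrict_iff' measurableSet_Ioo).2 (.of_forall fun t ht => ?_)
  have hcos : 0 < cos t := cos_pos_of_mem_Ioo ⟨by linarith [ht.1, pi_pos], ht.2⟩
  rw [norm_of_nonneg (rpow_nonneg hcos.le p), ← mul_rpow (by positivity) (by linarith [ht.2])]
  exact rpow_le_rpow_of_nonpos (mul_pos (by positivity) (by linarith [ht.2]))
    (two_div_pi_mul_le_cos ht.1.le ht.2.le) hp0.le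

lemma intervalIntegrable_cos_rpow {p : ℝ} (hp : -1 < p) :
    IntervalIntegrable (fun t => cos t ^ p) volume (-(π / 2)) (π / 2) := by
  rcases le_or_gt 0 p with hp0 | hp0
  · exact (continuous_cos.rpow_const fun _ => Or.inr hp0).intervalIntegrable _ _
  · have hright := intervalIntegrable_cos_rpow_of_neg hp hp0
    have hleft : IntervalIntegrable (fun t => cos t ^ p) volume (-(π / 2)) 0 := by
      simpa only [cos_neg, neg_zero] using
        ((IntervalIntegrable.iff_comp_neg (f := fun t => cos t ^ p)).mp hright).symm
    exact hleft.trans hright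

noncomputable def betaSin (x y : ℝ) : ℝ :=
  ∫ t in (-(π / 2))..(π / 2), cos t ^ (x - 1) * sin t * exp (y * t)

lemma integral_eq_zero_of_hasDerivAt_of_vanishing {f F : ℝ → ℝ} {a b : ℝ} (hab : a ≤ b)
    (hF : ContinuousOn F (Icc a b)) (hderiv : ∀ t ∈ Ioo a b, HasDerivAt F (f t) t)
    (hf : IntervalIntegrable f volume a b) (ha : F a = 0) (hb : F b = 0) :
    ∫ t in a..b, f t = 0 := by
  rw [integral_eq_sub_of_hasDerivAt_of_le hab hF hderiv hf, ha, hb, sub_zero]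

lemma hasDerivAt_exp_mul (y t : ℝ) : HasDerivAt (fun t => exp (y * t)) (y * exp (y * t)) t :=
  ((hasDerivAt_id' t).const_mul y).exp.congr_deriv (by ring)

lemma beta_add_two (x y : ℝ) :
    beta (x + 2) y = ∫ t in (-(π / 2))..(π / 2), cos t ^ (x + 1) * exp (y * t) := by
  rw [beta, show x + 2 - 1 = x + 1 by ring]

lemma betaSin_add_one (x y : ℝ) :
    betaSin (x + 1) y = ∫ t in (-(π / 2))..(π / 2), cos t ^ x * sin t * exp (y * t) := by
  rw [betaSin, add_sub_cancel_right]

lemma mul_beta_add_two {x : ℝ} (hx : -1 < x) (y : ℝ) :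
    y * beta (x + 2) y = (x + 1) * betaSin (x + 1) y := by
  have hexp : Continuous fun t => exp (y * t) := by fun_prop
  have hA : IntervalIntegrable (fun t => y * (cos t ^ (x + 1) * exp (y * t)))
      volume (-(π / 2)) (π / 2) :=
    ((intervalIntegrable_cos_rpow (by linarith)).mul_continuousOn hexp.continuousOn).const_mul _
  have hB : IntervalIntegrable (fun t => (x + 1) * (cos t ^ x * sin t * exp (y * t)))
      volume (-(π / 2)) (π / 2) :=
    (((intervalIntegrable_cos_rpow hx).mul_continuousOn
      continuous_sin.continuousOn).mul_continuousOn hexp.continuousOn).const_mul _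
  have hderiv : ∀ t ∈ Ioo (-(π / 2)) (π / 2),
      HasDerivAt (fun t => cos t ^ (x + 1) * exp (y * t))
        (y * (cos t ^ (x + 1) * exp (y * t)) - (x + 1) * (cos t ^ x * sin t * exp (y * t))) t :=
    fun t ht => (((hasDerivAt_cos t).rpow_const (.inl (cos_pos_of_mem_Ioo ht).ne')).mul
      (hasDerivAt_exp_mul y t)).congr_deriv (by rw [add_sub_cancel_right]; ring)
  rw [beta_add_two, betaSin_add_one, ← sub_eq_zero, ← intervalIntegral.integral_const_mul,
    ← intervalIntegral.integral_const_mul, ← intervalIntegral.integral_sub hA hB]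
  refine integral_eq_zero_of_hasDerivAt_of_vanishing (by linarith [pi_pos])
    ((continuous_cos.rpow_const fun _ => .inr (by linarith)).mul hexp).continuousOn hderiv
    (hA.sub hB) ?_ ?_ <;>
  simp [zero_rpow (by linarith : x + 1 ≠ 0)]

lemma add_one_mul_beta_add_two_add_mul_betaSin {x : ℝ} (hx : 0 < x) (y : ℝ) :
    (x + 1) * beta (x + 2) y + y * betaSin (x + 1) y = x * beta x y := by
  have hexp : Continuous fun t => exp (y * t) := by fun_prop
  have hA : IntervalIntegrable (fun t => (x + 1) * (cos t ^ (x + 1) * exp (y * t)))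
      volume (-(π / 2)) (π / 2) :=
    ((intervalIntegrable_cos_rpow (by linarith)).mul_continuousOn hexp.continuousOn).const_mul _
  have hB : IntervalIntegrable (fun t => y * (cos t ^ x * sin t * exp (y * t)))
      volume (-(π / 2)) (π / 2) :=
    (((intervalIntegrable_cos_rpow (by linarith)).mul_continuousOn
      continuous_sin.continuousOn).mul_continuousOn hexp.continuousOn).const_mul _
  have hC : IntervalIntegrable (fun t => x * (cos t ^ (x - 1) * exp (y * t)))
      volume (-(π / 2)) (π / 2) :=
    ((intervalIntegrable_cos_rpow (by linarith)).mul_continuousOn hexp.continuousOn).const_mul _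
  have hderiv : ∀ t ∈ Ioo (-(π / 2)) (π / 2),
      HasDerivAt (fun t => cos t ^ x * sin t * exp (y * t))
        ((x + 1) * (cos t ^ (x + 1) * exp (y * t)) + y * (cos t ^ x * sin t * exp (y * t))
          - x * (cos t ^ (x - 1) * exp (y * t))) t := by
    intro t ht
    have hc : cos t ≠ 0 := (cos_pos_of_mem_Ioo ht).ne'
    refine ((((hasDerivAt_cos t).rpow_const (.inl hc)).mul (hasDerivAt_sin t)).mul
      (hasDerivAt_exp_mul y t)).congr_deriv ?_
    have hpow : cos t ^ x = cos t ^ (x - 1) * cos t := by rw [← rpow_add_one hc, sub_add_cancel]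
    simp only [Pi.mul_apply]
    rw [rpow_add_one hc, hpow]
    linear_combination (-x * cos t ^ (x - 1) * exp (y * t)) * sin_sq_add_cos_sq t
  rw [← sub_eq_zero, beta_add_two, betaSin_add_one, beta, ← intervalIntegral.integral_const_mul,
    ← intervalIntegral.integral_const_mul, ← intervalIntegral.integral_const_mul,
    ← intervalIntegral.integral_add hA hB, ← intervalIntegral.integral_sub (hA.add hB) hC]
  refine integral_eq_zero_of_hasDerivAt_of_vanishing (by linarith [pi_pos])
    (((continuous_cos.rpow_const fun _ => .inr hx.le).mul continuous_sin).mul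
      hexp).continuousOn hderiv ((hA.add hB).sub hC) ?_ ?_ <;>
  simp [zero_rpow hx.ne']

theorem beta_identity (x y : ℝ) (hx : 0 < x) :
    beta (x + 2) y = (x * (x + 1) / ((x + 1) ^ 2 + y ^ 2)) * beta x y := by
  have hden : (x + 1) ^ 2 + y ^ 2 ≠ 0 := by positivity
  rw [div_mul_eq_mul_div, eq_div_iff hden]
  linear_combination (x + 1) * add_one_mul_beta_add_two_add_mul_betaSin hx y +
    y * mul_beta_add_two (by linarith) y
end
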